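/- Let $A \in \mathbb{R}^{k \times k}$ be Hurwitz and let $W \in \mathbb{R}^{k \times k}$ be skew-symmetric, i.e., $W^{\top} = -W$. If $Z \in \mathbb{R}^{k \times k}$ satisfies $A Z + Z A^{\top} + W = 0$, then $Z$ is skew-symmetric: $Z = -Z^{\top}$. -/

import Mathlib

/-!
Adding the equation to its transpose shows that `Y = Z + Zᵀ` solves the homogeneous Lyapunov
equation `A * Y = Y * (-Aᵀ)`. Since `A` is Hurwitz, the spectra of `A` and `-Aᵀ` lie in opposite
open half-planes, so the Sylvester equation has only the trivial solution: `Y` intertwines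
`χ_A(A) = 0` with `χ_A(-Aᵀ)`, which is invertible by the spectral mapping theorem.
-/

open Matrix Polynomial

theorem Polynomial.aeval_mul_eq_mul_aeval {R A : Type*} [CommSemiring R] [Semiring A]
    [Algebra R A] {a b x : A} (h : a * x = x * b) (p : R[X]) :
    aeval a p * x = x * aeval b p := by
  have hpow : ∀ m : ℕ, a ^ m * x = x * b ^ m := fun m => (SemiconjBy.pow_right h.symm m).symm
  induction p using Polynomial.induction_on' with
  | add p q hp hq => simp only [map_add, add_mul, mul_add, hp, hq]
  | monomial m c =>
    simp only [aeval_monomial]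
    rw [mul_assoc, hpow m, ← mul_assoc, Algebra.commutes c x, mul_assoc]

namespace Matrix

variable {n : Type*} [Fintype n] [DecidableEq n]

theorem spectrum_transpose {R : Type*} [CommRing R] (B : Matrix n n R) :
    spectrum R Bᵀ = spectrum R B := by
  ext μ
  simp only [mem_spectrum_iff_not_isUnit_eval_charpoly, charpoly_transpose]

theorem eq_zero_of_mul_eq_mul_of_disjoint_spectrum {K : Type*} [Field K] [IsAlgClosed K]
    {A B X : Matrix n n K} (hAB : Disjoint (spectrum K A) (spectrum K B))
    (hX : A * X = X * B) : X = 0 := by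
  cases isEmpty_or_nonempty n
  · exact Subsingleton.elim _ _
  have hdeg : 0 < A.charpoly.degree := by
    rw [degree_eq_natDegree A.charpoly_monic.ne_zero, charpoly_natDegree_eq_dim]
    exact_mod_cast Fintype.card_pos
  have hunit : IsUnit (aeval B A.charpoly) := by
    rw [← spectrum.zero_notMem_iff K, spectrum.map_polynomial_aeval_of_degree_pos B _ hdeg]
    rintro ⟨μ, hμB, hμ⟩
    exact hAB.notMem_of_mem_right hμB (mem_spectrum_iff_isRoot_charpoly.mpr hμ)
  have hX0 : X * aeval B A.charpoly = 0 := by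
    rw [← aeval_mul_eq_mul_aeval hX, aeval_self_charpoly, zero_mul]
  exact hunit.mul_left_eq_zero.mp hX0

def IsHurwitz (A : Matrix n n ℝ) : Prop :=
  ∀ μ ∈ spectrum ℂ (A.map (algebraMap ℝ ℂ)), μ.re < 0

theorem IsHurwitz.eq_zero_of_mul_add_mul_transpose_eq_zero {A Y : Matrix n n ℝ}
    (hA : A.IsHurwitz) (hY : A * Y + Y * Aᵀ = 0) : Y = 0 := by
  set toℂ : Matrix n n ℝ →+* Matrix n n ℂ := (algebraMap ℝ ℂ).mapMatrix
  have hdisj : Disjoint (spectrum ℂ (toℂ A)) (spectrum ℂ (toℂ (-Aᵀ))) := by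
    refine Set.disjoint_left.mpr fun μ hμ hμ' => ?_
    rw [map_neg, ← spectrum.neg_eq, Set.mem_neg, RingHom.mapMatrix_apply, transpose_map,
      spectrum_transpose] at hμ'
    have hneg : -μ.re < 0 := Complex.neg_re μ ▸ hA _ hμ'
    linarith [hA μ hμ]
  have hYℂ : toℂ Y = 0 := by
    refine eq_zero_of_mul_eq_mul_of_disjoint_spectrum hdisj ?_
    rw [← map_mul, ← map_mul, mul_neg, eq_neg_of_add_eq_zero_left hY]
  exact map_injective (algebraMap ℝ ℂ).injective (hYℂ.trans (map_zero toℂ).symm)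

end Matrix

/-- If `A` is Hurwitz and `W` is skew-symmetric, then any solution `Z` of
`A * Z + Z * Aᵀ + W = 0` is skew-symmetric: `Z = -Zᵀ`. -/
theorem hurwitz_lyapunov_skew_solution
    (k : ℕ) (A : Matrix (Fin k) (Fin k) ℝ)
    (hA : ∀ μ ∈ spectrum ℂ (A.map (algebraMap ℝ ℂ)), μ.re < 0)
    (W : Matrix (Fin k) (Fin k) ℝ) (hW : Wᵀ = -W)
    (Z : Matrix (Fin k) (Fin k) ℝ)
    (hZ : A * Z + Z * Aᵀ + W = 0) :
    Z = -Zᵀ := by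
  have hZt : A * Zᵀ + Zᵀ * Aᵀ - W = 0 := by
    simpa [transpose_add, transpose_mul, hW, sub_eq_add_neg, add_comm] using congrArg transpose hZ
  have hsym : A * (Z + Zᵀ) + (Z + Zᵀ) * Aᵀ = 0 :=
    calc A * (Z + Zᵀ) + (Z + Zᵀ) * Aᵀ = (A * Z + Z * Aᵀ + W) + (A * Zᵀ + Zᵀ * Aᵀ - W) := by
          noncomm_ring
      _ = 0 := by rw [hZ, hZt, add_zero]
  exact eq_neg_of_add_eq_zero_left (IsHurwitz.eq_zero_of_mul_add_mul_transpose_eq_zero hA hsym)
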